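/- arXiv:2309.07324 — 2 statements merged into one kernel-verified Lean document; each statement's English description precedes it below -/
import Mathlib

section
/- Fix a variance v > 0 and let S(x) = 1/(1 + e^{−x}) be the Sigmoid function. Then the map μ ↦ ∫ S(x) d(N(μ, v))(x) is strictly increasing in the mean μ: if μ₁ < μ₂ then ∫ S d(N(μ₁, v)) < ∫ S d(N(μ₂, v)), where N(μ, v) denotes the Gaussian probability measure on ℝ with mean μ and variance v. -/
open MeasureTheory ProbabilityTheory

lemma sigmoid_cont : Continuous (fun x : ℝ => 1 / (1 + Real.exp (-x))) := by
  apply Continuous.div continuous_const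
  · exact continuous_const.add (Real.continuous_exp.comp continuous_neg)
  · intro x; positivity

lemma sigmoid_integrable (ν : Measure ℝ) [IsProbabilityMeasure ν] :
    Integrable (fun x : ℝ => 1 / (1 + Real.exp (-x))) ν := by
  apply Integrable.mono' (integrable_const (1 : ℝ))
    sigmoid_cont.aestronglyMeasurable
  filter_upwards with x
  rw [Real.norm_eq_abs, abs_of_nonneg (by positivity)]
  rw [div_le_one (by positivity)]
  nlinarith [Real.exp_pos (-x)]

lemma sigmoid_strictMono : StrictMono (fun x : ℝ => 1 / (1 + Real.exp (-x))) := by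
  intro a b hab
  have h1 : Real.exp (-b) < Real.exp (-a) := Real.exp_lt_exp.2 (by linarith)
  have := Real.exp_pos (-a)
  have := Real.exp_pos (-b)
  apply div_lt_div_of_pos_left one_pos (by positivity) (by linarith)

/-- For a fixed variance `v > 0`, the map `μ ↦ ∫ S x ∂(N(μ, v))`, where
`S x = 1 / (1 + exp (-x))` is the Sigmoid function, is strictly increasing in the
mean `μ`. -/
theorem sigmoid_gaussian_expectation_strictMono (v : NNReal) (hv : 0 < v) :
    ∀ μ₁ μ₂ : ℝ, μ₁ < μ₂ →
      ∫ x, 1 / (1 + Real.exp (-x)) ∂(gaussianReal μ₁ v) <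
        ∫ x, 1 / (1 + Real.exp (-x)) ∂(gaussianReal μ₂ v) := by
  intro μ₁ μ₂ hμ
  set S : ℝ → ℝ := fun x => 1 / (1 + Real.exp (-x)) with hS
  have key : ∀ μ : ℝ, ∫ x, S x ∂(gaussianReal μ v) = ∫ x, S (x + μ) ∂(gaussianReal 0 v) := by
    intro μ
    have h := gaussianReal_map_add_const (μ := 0) (v := v) μ
    rw [zero_add] at h
    rw [← h, integral_map (by fun_prop) sigmoid_cont.aestronglyMeasurable]
  rw [key, key]
  have hint : ∀ μ : ℝ, Integrable (fun x => S (x + μ)) (gaussianReal 0 v) := by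
    intro μ
    have h := gaussianReal_map_add_const (μ := 0) (v := v) μ
    rw [zero_add] at h
    have := sigmoid_integrable (gaussianReal μ v)
    rw [← h] at this
    exact (integrable_map_measure sigmoid_cont.aestronglyMeasurable (by fun_prop)).mp this
  rw [← sub_pos, ← integral_sub (hint μ₂) (hint μ₁)]
  have hpos : ∀ x : ℝ, 0 < S (x + μ₂) - S (x + μ₁) := fun x =>
    sub_pos.2 (sigmoid_strictMono (by linarith))
  rw [integral_pos_iff_support_of_nonneg (fun x => (hpos x).le)
    ((hint μ₂).sub (hint μ₁))]
  have : Function.support (fun x => S (x + μ₂) - S (x + μ₁)) = Set.univ := by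
    ext x; simp [Function.mem_support, (hpos x).ne']
  rw [this]
  simp [(measure_univ (μ := gaussianReal 0 v))]
end

section
/- For every mean μ > 0 and variance v ≥ 0, the expectation of the Sigmoid function under the Gaussian distribution N(μ, v) is strictly greater than one half: ∫ S(x) d(N(μ, v))(x) > 1/2, where S(x) = 1/(1 + e^{−x}) and N(μ, v) denotes the Gaussian probability measure on ℝ with mean μ and variance v. -/
/-!
The Gaussian `N(μ, v)` is invariant under the reflection `x ↦ 2μ - x`, so the expectation of
`S` equals the expectation of `(S(x) + S(2μ - x)) / 2`. Since `S(-x) = 1 - S(x)` and `S` is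
strictly increasing, `S(x) + S(2μ - x) > S(x) + S(-x) = 1` for every `x` when `μ > 0`.
-/

open MeasureTheory ProbabilityTheory Real

lemma MeasureTheory.integral_pos_of_forall_pos {α : Type*} [MeasurableSpace α] {μ : Measure α}
    [NeZero μ] {f : α → ℝ} (hfi : Integrable f μ) (hf : ∀ x, 0 < f x) : 0 < ∫ x, f x ∂μ := by
  have hsupp : Function.support f = Set.univ := Set.eq_univ_of_forall fun x ↦ (hf x).ne'
  rw [integral_pos_iff_support_of_nonneg (fun x ↦ (hf x).le) hfi, hsupp]
  simp [NeZero.ne μ]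

lemma MeasureTheory.MeasurePreserving.lt_integral_of_forall_lt_add_comp {α : Type*}
    [MeasurableSpace α] {μ : Measure α} [IsProbabilityMeasure μ] {T : α → α}
    (hT : MeasurePreserving T μ μ) {f : α → ℝ} (hf : Integrable f μ) {c : ℝ}
    (hc : ∀ x, 2 * c < f x + f (T x)) : c < ∫ x, f x ∂μ := by
  have hfT : Integrable (fun x ↦ f (T x)) μ := hT.integrable_comp_of_integrable hf
  have hsum : Integrable (fun x ↦ f x + f (T x)) μ := hf.add hfT
  have hint_comp : ∫ x, f (T x) ∂μ = ∫ x, f x ∂μ := by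
    rw [← integral_map hT.aemeasurable (by rw [hT.map_eq]; exact hf.aestronglyMeasurable),
      hT.map_eq]
  have hpos : 0 < ∫ x, (f x + f (T x) - 2 * c) ∂μ :=
    integral_pos_of_forall_pos (hsum.sub (integrable_const _)) fun x ↦ sub_pos.mpr (hc x)
  rw [integral_sub hsum (integrable_const _), integral_add hf hfT, hint_comp,
    integral_const, probReal_univ, one_smul] at hpos
  linarith

lemma ProbabilityTheory.measurePreserving_two_mul_sub_gaussianReal (μ : ℝ) (v : NNReal) :
    MeasurePreserving (fun x ↦ 2 * μ - x) (gaussianReal μ v) (gaussianReal μ v) :=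
  ⟨by fun_prop, by rw [gaussianReal_map_const_sub]; ring_nf⟩

lemma Real.one_lt_sigmoid_add_sigmoid_sub {a : ℝ} (ha : 0 < a) (x : ℝ) :
    1 < sigmoid x + sigmoid (a - x) := by
  have := sigmoid_strictMono (show -x < a - x by linarith)
  rw [sigmoid_neg] at this
  linarith

lemma Real.integrable_sigmoid (μ : Measure ℝ) [IsFiniteMeasure μ] : Integrable sigmoid μ :=
  .of_bound continuous_sigmoid.aestronglyMeasurable 1 <| .of_forall fun x ↦ by
    rw [norm_of_nonneg (sigmoid_nonneg x)]
    exact sigmoid_le_one x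

/-- For every mean `μ > 0` and variance `v ≥ 0`, the expectation of the Sigmoid
function `S x = 1 / (1 + exp (-x))` under the Gaussian distribution `N(μ, v)` is
strictly greater than `1/2`. -/
theorem sigmoid_gaussian_positive_mean_expectation (μ : ℝ) (hμ : 0 < μ) (v : NNReal) :
    ∫ x, 1 / (1 + Real.exp (-x)) ∂(gaussianReal μ v) > 1 / 2 := by
  simp_rw [one_div, ← sigmoid_def]
  refine (measurePreserving_two_mul_sub_gaussianReal μ v).lt_integral_of_forall_lt_add_comp
    (integrable_sigmoid _) fun x ↦ ?_
  simpa using one_lt_sigmoid_add_sigmoid_sub (by positivity : 0 < 2 * μ) x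
end
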